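/- arXiv:2510.03105 — 2 statements merged into one kernel-verified Lean document; each statement's English description precedes it below -/
import Mathlib

section
/- (Remark (2)) Let d be an even integer with d ≥ max(2, deg f) and let N_i > 0. Set h := (1 − Σ_{i=1}^n (x_i/N_i)^d) (a single constraint, m = 1) and i := (1/n − (x₁/N₁)^d, …, 1/n − (xₙ/Nₙ)^d) (n constraints). Then s(f,h) ≤ s(f,i) (as elements of ℝ ∪ {±∞}). -/
open MvPolynomial Finset

noncomputable section

/-- The weight `|α| = Σᵢ αᵢ` of a multi-exponent. -/
def wt {n : ℕ} (α : Fin n →₀ ℕ) : ℕ := α.sum fun _ e => e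

/-- `Δ(f)`: exponents `α` with `|α| ≤ d`, `f_α ≠ 0`, `α ∉ {0, d·e₁, …, d·eₙ}`, and
`f_α x^α` not a square in `ℝ[x]` (equivalently `f_α < 0` or some `αᵢ` odd). -/
def Delta {n : ℕ} (d : ℕ) (f : MvPolynomial (Fin n) ℝ) : Finset (Fin n →₀ ℕ) :=
  f.support.filter fun α =>
    wt α ≤ d ∧ α ≠ 0 ∧ (∀ i, α ≠ Finsupp.single i d) ∧
      (f.coeff α < 0 ∨ ∃ i, Odd (α i))

/-- `z` is an `h`-feasible family. -/
def Feasible {n : ℕ} (d : ℕ) (h : MvPolynomial (Fin n) ℝ)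
    (z : (Fin n →₀ ℕ) → Fin n → ℝ) : Prop :=
  (∀ α ∈ Delta d h, ∀ i, 0 ≤ z α i ∧ (z α i = 0 ↔ α i = 0)) ∧
  (∀ i, ∑ α ∈ Delta d h, z α i ≤ h.coeff (Finsupp.single i d)) ∧
  (∀ α ∈ Delta d h, wt α = d →
    ∏ i ∈ univ.filter (fun i => 0 < α i), (z α i / (α i : ℝ)) ^ (α i) =
      (h.coeff α / (d : ℝ)) ^ d)

/-- The objective value `obj_h(z)`. -/
def obj {n : ℕ} (d : ℕ) (h : MvPolynomial (Fin n) ℝ)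
    (z : (Fin n →₀ ℕ) → Fin n → ℝ) : ℝ :=
  ∑ α ∈ (Delta d h).filter (fun α => wt α < d),
    ((d : ℝ) - (wt α : ℝ)) *
      ((h.coeff α / (d : ℝ)) ^ d *
        ∏ i ∈ univ.filter (fun i => 0 < α i), ((α i : ℝ) / z α i) ^ (α i)) ^
        ((1 : ℝ) / ((d : ℝ) - (wt α : ℝ)))

/-- `ρ(h) = inf { obj_h(z) : z h-feasible }`, `+∞` if infeasible. -/
def rho {n : ℕ} (d : ℕ) (h : MvPolynomial (Fin n) ℝ) : EReal :=
  sInf {r : EReal | ∃ z, Feasible d h z ∧ r = ((obj d h z : ℝ) : EReal)}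

/-- `h_gp = h(0) - ρ(h)`. -/
def gp {n : ℕ} (d : ℕ) (h : MvPolynomial (Fin n) ℝ) : EReal :=
  ((h.coeff 0 : ℝ) : EReal) - rho d h

/-- `s(f,g) = sup { G(λ)_gp : λ ∈ [0,∞)^m }` where `G(λ) = f - Σ λⱼ gⱼ`. -/
def sBound {n m : ℕ} (d : ℕ) (f : MvPolynomial (Fin n) ℝ)
    (g : Fin m → MvPolynomial (Fin n) ℝ) : EReal :=
  sSup {r : EReal | ∃ lam : Fin m → ℝ, (∀ j, 0 ≤ lam j) ∧
    r = gp d (f - ∑ j, C (lam j) * g j)}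

/-- `Δ'(f)`: nonzero exponents `α` with `f_α ≠ 0` and `f_α x^α` not a square. -/
def Delta' {n : ℕ} (f : MvPolynomial (Fin n) ℝ) : Finset (Fin n →₀ ℕ) :=
  f.support.filter fun α => α ≠ 0 ∧ (f.coeff α < 0 ∨ ∃ i, Odd (α i))

/-- The trivial bound `f_{tr,N} = f(0) - Σ_{α ∈ Δ'(f)} |f_α| N^α`. -/
def trivialBound {n : ℕ} (f : MvPolynomial (Fin n) ℝ) (N : Fin n → ℝ) : ℝ :=
  f.coeff 0 - ∑ α ∈ Delta' f, |f.coeff α| * ∏ i, N i ^ (α i)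

/-- Remark (2): `s(f,h) ≤ s(f,i)` where `h` is the single
constraint `1 - Σᵢ (xᵢ/Nᵢ)^d` and `i = (1/n - (x₁/N₁)^d, …, 1/n - (xₙ/Nₙ)^d)`. -/
theorem stmt_17 (n d : ℕ) (hn : 0 < n) (hd2 : 2 ≤ d) (hdeven : Even d)
    (f : MvPolynomial (Fin n) ℝ) (hf : f.totalDegree ≤ d)
    (N : Fin n → ℝ) (hN : ∀ i, 0 < N i)
    (h : Fin 1 → MvPolynomial (Fin n) ℝ)
    (hh : h 0 = 1 - ∑ i, (C (N i)⁻¹ * X i) ^ d)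
    (iP : Fin n → MvPolynomial (Fin n) ℝ)
    (hiP : ∀ j, iP j = C ((1 : ℝ) / n) - (C (N j)⁻¹ * X j) ^ d) :
    sBound d f h ≤ sBound d f iP := by
  apply sSup_le_sSup
  rintro r ⟨lam, hlam, hr⟩
  refine ⟨fun _ => lam 0, fun j => hlam 0, ?_⟩
  rw [hr]
  congr 1
  have hsum : ∑ j, C (lam 0) * iP j = ∑ j, C (lam j) * h j := by
    simp only [hiP, Fin.sum_univ_one, hh, mul_sub]
    rw [Finset.sum_sub_distrib, ← Finset.mul_sum, ← Finset.mul_sum]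
    have : (∑ _x : Fin n, C ((1:ℝ)/n)) = (1 : MvPolynomial (Fin n) ℝ) := by
      rw [Finset.sum_const, Finset.card_univ, Fintype.card_fin, nsmul_eq_mul,
        show ((n:ℕ):MvPolynomial (Fin n) ℝ) = C ((n:ℕ):ℝ) by simp, ← C_mul,
        mul_one_div, div_self (by exact_mod_cast hn.ne'), C_1]
    rw [this]
  rw [hsum]
end
end

section
/- (Remark (3)) Let d be an even integer with d ≥ max(2, deg f), let N_i > 0, and let i := (1/n − (x₁/N₁)^d, …, 1/n − (xₙ/Nₙ)^d). Let N' := (N₁·n^{−1/d}, …, Nₙ·n^{−1/d}). Then f_{tr,N'} ≤ s(f,i), and if f_{d,i} ≤ 0 for every i = 1,…,n, then f_{tr,N'} = s(f,i). -/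
open MvPolynomial Finset

noncomputable section

/-! ### Auxiliary lemmas -/

lemma wt_eq_sum {n : ℕ} (α : Fin n →₀ ℕ) : wt α = ∑ i, α i :=
  Finsupp.sum_fintype _ _ (fun _ => rfl)

lemma sum_filter_alpha {n : ℕ} (α : Fin n →₀ ℕ) :
    ∑ i ∈ univ.filter (fun i => 0 < α i), (α i) = wt α := by
  rw [wt_eq_sum]
  exact Finset.sum_filter_of_ne (fun i _ h => Nat.pos_of_ne_zero h)

lemma prod_filter_pow {n : ℕ} (α : Fin n →₀ ℕ) (g : Fin n → ℝ) :
    ∏ i ∈ univ.filter (fun i => 0 < α i), g i ^ α i = ∏ i, g i ^ α i :=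
  Finset.prod_filter_of_ne (fun i _ h => by
    rcases Nat.eq_zero_or_pos (α i) with h0 | h0
    · exact absurd (by rw [h0, pow_zero]) h
    · exact h0)

lemma amgm_main {n d : ℕ} (hd : 0 < d) (α : Fin n →₀ ℕ) (hwt : wt α ≤ d)
    (a : ℝ) (ha : 0 < a) (Np : Fin n → ℝ) (hNp : ∀ i, 0 < Np i)
    (z : Fin n → ℝ) (hz : ∀ i, 0 < α i → 0 < z i)
    (x0 : ℝ) (hx0 : 0 ≤ x0)
    (hX : x0 ^ (d - wt α) = (a / d) ^ d *
      ∏ i ∈ univ.filter (fun i => 0 < α i), ((α i : ℝ) / z i) ^ α i) :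
    a * ∏ i, Np i ^ α i ≤ ((d : ℝ) - wt α) * x0 +
      ∑ i ∈ univ.filter (fun i => 0 < α i), z i * Np i ^ d := by
  classical
  set F := univ.filter (fun i => 0 < (α : Fin n →₀ ℕ) i) with hF
  have hD : (0:ℝ) < d := by exact_mod_cast hd
  have hD0 : (d:ℝ) ≠ 0 := ne_of_gt hD
  have hwtR : (wt α : ℝ) ≤ d := by exact_mod_cast hwt
  have hαF : ∀ i ∈ F, 0 < α i := fun i hi => (mem_filter.mp hi).2
  have hzF : ∀ i ∈ F, 0 < z i := fun i hi => hz i (hαF i hi)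
  have hxF : ∀ i ∈ F, 0 ≤ z i * Np i ^ d * d / (α i : ℝ) := by
    intro i hi
    have h1 := hzF i hi
    have h2 := hNp i
    positivity
  set w : Option (Fin n) → ℝ := fun o => o.elim (((d:ℝ) - wt α)/d) (fun i => (α i : ℝ)/d) with hw
  set x : Option (Fin n) → ℝ :=
    fun o => o.elim ((d:ℝ) * x0) (fun i => z i * Np i ^ d * d / (α i : ℝ)) with hx
  set s : Finset (Option (Fin n)) := insert none (F.image some) with hs
  have hnone : none ∉ F.image some := by simp
  have hsome : Set.InjOn some (F : Set (Fin n)) := fun i _ j _ h => Option.some_injective _ h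
  have hwnn : ∀ o ∈ s, 0 ≤ w o := by
    rintro (_|i) _
    · exact div_nonneg (by linarith) hD.le
    · exact div_nonneg (Nat.cast_nonneg _) hD.le
  have hsumF : ∑ i ∈ F, ((α i : ℝ)) = (wt α : ℝ) := by
    rw [← Nat.cast_sum]
    exact_mod_cast congrArg (Nat.cast : ℕ → ℝ) (sum_filter_alpha α)
  have hw1 : ∑ o ∈ s, w o = 1 := by
    rw [hs, Finset.sum_insert hnone, Finset.sum_image (fun i hi j hj h => hsome hi hj h)]
    simp only [hw, Option.elim]
    rw [← Finset.sum_div, hsumF]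
    field_simp
    ring
  have hxnn : ∀ o ∈ s, 0 ≤ x o := by
    rintro (_|i) ho
    · exact mul_nonneg hD.le hx0
    · simp only [hs, Finset.mem_insert, Finset.mem_image] at ho
      rcases ho with h | ⟨j, hj, hji⟩
      · exact absurd h (by simp)
      · cases Option.some_injective _ hji
        exact hxF _ hj
  have key := Real.geom_mean_le_arith_mean_weighted s w x hwnn hw1 hxnn
  have hAr : ∑ o ∈ s, w o * x o = ((d : ℝ) - wt α) * x0 + ∑ i ∈ F, z i * Np i ^ d := by
    rw [hs, Finset.sum_insert hnone, Finset.sum_image (fun i hi j hj h => hsome hi hj h)]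
    simp only [hw, hx, Option.elim]
    congr 1
    · field_simp
    · refine Finset.sum_congr rfl (fun i hi => ?_)
      have hαi : ((α i : ℝ)) ≠ 0 := by exact_mod_cast (hαF i hi).ne'
      field_simp
  set P := ∏ i, Np i ^ α i with hP
  have hPpos : 0 < P := Finset.prod_pos (fun i _ => pow_pos (hNp i) _)
  have hGe : ∏ o ∈ s, x o ^ w o = a * P := by
    rw [hs, Finset.prod_insert hnone, Finset.prod_image (fun i hi j hj h => hsome hi hj h)]
    simp only [hw, hx, Option.elim]
    have c1 : ∀ i ∈ F, (z i * Np i ^ d * d / (α i : ℝ)) ^ ((α i : ℝ)/(d:ℝ))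
        = ((z i * Np i ^ d * d / (α i : ℝ)) ^ (α i)) ^ ((1:ℝ)/d) := by
      intro i hi
      rw [← Real.rpow_natCast (z i * Np i ^ d * (d:ℝ) / (α i : ℝ)) (α i),
        ← Real.rpow_mul (hxF i hi), mul_one_div]
    rw [Finset.prod_congr rfl c1,
      Real.finset_prod_rpow F _ (fun i hi => pow_nonneg (hxF i hi) _) ((1:ℝ)/d)]
    have c2 : ((d:ℝ) * x0) ^ (((d:ℝ) - wt α)/d)
        = (((d:ℝ) * x0) ^ (d - wt α)) ^ ((1:ℝ)/d) := by
      have hb : (0:ℝ) ≤ (d:ℝ) * x0 := mul_nonneg hD.le hx0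
      rw [← Real.rpow_natCast ((d:ℝ) * x0) (d - wt α), ← Real.rpow_mul hb, mul_one_div,
        Nat.cast_sub hwt]
    rw [c2, ← Real.mul_rpow (pow_nonneg (mul_nonneg hD.le hx0) _)
      (Finset.prod_nonneg (fun i hi => pow_nonneg (hxF i hi) _))]
    have inner : ((d:ℝ) * x0) ^ (d - wt α) * ∏ i ∈ F, (z i * Np i ^ d * d / (α i : ℝ)) ^ α i
        = (a * P) ^ d := by
      rw [mul_pow ((d:ℝ)) x0, hX]
      have c3 : ∀ i ∈ F, ((α i : ℝ) / z i) ^ α i * (z i * Np i ^ d * d / (α i : ℝ)) ^ α i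
          = (Np i ^ α i) ^ d * (d:ℝ) ^ α i := by
        intro i hi
        have hzi := (hzF i hi).ne'
        have hαi : ((α i : ℝ)) ≠ 0 := by exact_mod_cast (hαF i hi).ne'
        have hb : ((α i : ℝ) / z i) * (z i * Np i ^ d * d / (α i : ℝ)) = Np i ^ d * d := by
          field_simp
        rw [← mul_pow, hb, mul_pow, ← pow_mul, mul_comm d (α i), pow_mul]
      calc (d:ℝ) ^ (d - wt α) * ((a / d) ^ d * ∏ i ∈ F, ((α i : ℝ) / z i) ^ α i) *
            ∏ i ∈ F, (z i * Np i ^ d * d / (α i : ℝ)) ^ α i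
          = (d:ℝ) ^ (d - wt α) * (a / d) ^ d *
            ∏ i ∈ F, (((α i : ℝ) / z i) ^ α i * (z i * Np i ^ d * d / (α i : ℝ)) ^ α i) := by
            rw [Finset.prod_mul_distrib]; ring
        _ = (d:ℝ) ^ (d - wt α) * (a / d) ^ d *
            ((∏ i ∈ F, (Np i ^ α i) ^ d) * ∏ i ∈ F, (d:ℝ) ^ α i) := by
            rw [Finset.prod_congr rfl c3, Finset.prod_mul_distrib]
        _ = ((d:ℝ) ^ (d - wt α) * (d:ℝ) ^ (wt α)) * ((a / d) ^ d * P ^ d) := by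
            rw [Finset.prod_pow_eq_pow_sum, sum_filter_alpha, Finset.prod_pow,
              prod_filter_pow, ← hP]
            ring
        _ = (a * P) ^ d := by
            rw [← pow_add, Nat.sub_add_cancel hwt, ← mul_pow]
            field_simp
            rw [← mul_pow]; congr 1; field_simp
    rw [inner, ← Real.rpow_natCast (a * P) d, ← Real.rpow_mul (by positivity), mul_one_div,
      div_self hD0, Real.rpow_one]
  rw [hGe, hAr] at key
  exact key

lemma prod_c_mul_powd {n : ℕ} (d : ℕ) (α : Fin n →₀ ℕ) (c : ℝ) (g : Fin n → ℝ) :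
    ∏ i ∈ univ.filter (fun i => 0 < α i), (c * g i ^ d) ^ α i
      = c ^ wt α * (∏ i, g i ^ α i) ^ d := by
  rw [Finset.prod_congr rfl (fun i _ => mul_pow c (g i ^ d) (α i)), Finset.prod_mul_distrib,
    Finset.prod_pow_eq_pow_sum, sum_filter_alpha]
  congr 1
  rw [Finset.prod_congr rfl
    (fun i _ => by rw [← pow_mul, mul_comm d (α i), pow_mul] :
      ∀ i ∈ univ.filter (fun i => 0 < α i), (g i ^ d) ^ α i = (g i ^ α i) ^ d),
    Finset.prod_pow, prod_filter_pow]

section cons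
variable {n d : ℕ} (α : Fin n →₀ ℕ) (a : ℝ) (Np : Fin n → ℝ)

lemma consC1 (hd : 0 < d) (ha : 0 < a) (hNp : ∀ i, 0 < Np i) (hwt : wt α = d) :
    ∏ i ∈ univ.filter (fun i => 0 < α i),
      (((α i : ℝ) * (a * ∏ j, Np j ^ α j) / (d * Np i ^ d)) / (α i : ℝ)) ^ α i
        = (a / d) ^ d := by
  have hD0 : (d:ℝ) ≠ 0 := by positivity
  set P := ∏ j, Np j ^ α j with hP
  have hPpos : 0 < P := Finset.prod_pos (fun i _ => pow_pos (hNp i) _)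
  have hpt : ∀ i ∈ univ.filter (fun i => 0 < α i),
      (((α i : ℝ) * (a * P) / (d * Np i ^ d)) / (α i : ℝ)) ^ α i
        = ((a * P / d) * (Np i)⁻¹ ^ d) ^ α i := by
    intro i hi
    have hαi : ((α i : ℝ)) ≠ 0 := by exact_mod_cast (mem_filter.mp hi).2.ne'
    have hNpi := (hNp i).ne'
    congr 1
    rw [inv_pow]
    field_simp
  rw [Finset.prod_congr rfl hpt, prod_c_mul_powd]
  have h1 : ∏ i, (Np i)⁻¹ ^ α i = P⁻¹ := by
    rw [hP, ← Finset.prod_inv_distrib]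
    exact Finset.prod_congr rfl (fun i _ => by rw [inv_pow])
  rw [h1, hwt]
  have h2 : a * P / d = a / d * P := by ring
  rw [h2, mul_pow, inv_pow, mul_assoc, mul_inv_cancel₀ (by positivity), mul_one]

lemma consC2 (hd : 0 < d) (ha : 0 < a) (hNp : ∀ i, 0 < Np i) (hwt : wt α ≤ d) :
    (a / d) ^ d * ∏ i ∈ univ.filter (fun i => 0 < α i),
      ((α i : ℝ) / ((α i : ℝ) * (a * ∏ j, Np j ^ α j) / (d * Np i ^ d))) ^ α i
        = ((a * ∏ j, Np j ^ α j) / d) ^ (d - wt α) := by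
  have hD0 : (d:ℝ) ≠ 0 := by positivity
  set P := ∏ j, Np j ^ α j with hP
  have hPpos : 0 < P := Finset.prod_pos (fun i _ => pow_pos (hNp i) _)
  have hm0 : a * P ≠ 0 := by positivity
  have hpt : ∀ i ∈ univ.filter (fun i => 0 < α i),
      ((α i : ℝ) / ((α i : ℝ) * (a * P) / (d * Np i ^ d))) ^ α i
        = (((d:ℝ) / (a * P)) * Np i ^ d) ^ α i := by
    intro i hi
    have hαi : ((α i : ℝ)) ≠ 0 := by exact_mod_cast (mem_filter.mp hi).2.ne'
    have hNpi := (hNp i).ne'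
    congr 1
    field_simp
  rw [Finset.prod_congr rfl hpt, prod_c_mul_powd, ← hP]
  have h2 : (a / d) ^ d * P ^ d = (a * P / d) ^ d := by
    rw [← mul_pow]; congr 1; ring
  have h3 : (a * P / d) ^ d = (a * P / d) ^ (d - wt α) * (a * P / d) ^ wt α := by
    rw [← pow_add, Nat.sub_add_cancel hwt]
  have h4 : (a * P / d) ^ wt α * ((d:ℝ) / (a * P)) ^ wt α = 1 := by
    rw [← mul_pow, div_mul_div_comm, mul_comm (a*P) (d:ℝ), div_self (by positivity), one_pow]
  calc (a / d) ^ d * (((d:ℝ) / (a * P)) ^ wt α * P ^ d)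
      = ((a / d) ^ d * P ^ d) * ((d:ℝ) / (a * P)) ^ wt α := by ring
    _ = (a * P / d) ^ (d - wt α) * ((a * P / d) ^ wt α * ((d:ℝ) / (a * P)) ^ wt α) := by
        rw [h2, h3]; ring
    _ = (a * P / d) ^ (d - wt α) := by rw [h4, mul_one]

lemma consC3 (hd : 0 < d) (hNp : ∀ i, 0 < Np i) :
    ∑ i, ((α i : ℝ) * (a * ∏ j, Np j ^ α j) / (d * Np i ^ d)) * Np i ^ d
      = (wt α : ℝ) / d * (a * ∏ j, Np j ^ α j) := by
  have hD0 : (d:ℝ) ≠ 0 := by positivity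
  set P := ∏ j, Np j ^ α j with hP
  have hpt : ∀ i : Fin n, ((α i : ℝ) * (a * P) / (d * Np i ^ d)) * Np i ^ d
      = (α i : ℝ) * ((a * P) / d) := by
    intro i
    have hNpi := (hNp i).ne'
    field_simp
  rw [Finset.sum_congr rfl (fun i _ => hpt i), ← Finset.sum_mul]
  have hs : ∑ i, ((α i : ℕ) : ℝ) = (wt α : ℝ) := by
    rw [← Nat.cast_sum, ← wt_eq_sum]
  rw [hs]
  ring

end cons

lemma coeff_iP {n d : ℕ} {N : Fin n → ℝ} {iP : Fin n → MvPolynomial (Fin n) ℝ}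
    (hiP : ∀ j, iP j = C ((1 : ℝ) / n) - (C (N j)⁻¹ * X j) ^ d) (j : Fin n) (β : Fin n →₀ ℕ) :
    (iP j).coeff β = (if 0 = β then (1:ℝ)/n else 0)
      - ((N j)⁻¹)^d * (if Finsupp.single j d = β then 1 else 0) := by
  rw [hiP j, mul_pow, ← C_pow, coeff_sub, coeff_C, coeff_C_mul, coeff_X_pow]

lemma coeff_G_ne {n d : ℕ} (f : MvPolynomial (Fin n) ℝ) {N : Fin n → ℝ}
    {iP : Fin n → MvPolynomial (Fin n) ℝ}
    (hiP : ∀ j, iP j = C ((1 : ℝ) / n) - (C (N j)⁻¹ * X j) ^ d) (lam : Fin n → ℝ)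
    (β : Fin n →₀ ℕ) (h0 : β ≠ 0) (hs : ∀ i, β ≠ Finsupp.single i d) :
    (f - ∑ j, C (lam j) * iP j).coeff β = f.coeff β := by
  rw [coeff_sub, coeff_sum]
  have h : ∀ j : Fin n, coeff β (C (lam j) * iP j) = 0 := by
    intro j
    rw [coeff_C_mul, coeff_iP hiP]
    rw [if_neg (fun h => h0 h.symm), if_neg (fun h => (hs j) h.symm)]
    ring
  rw [Finset.sum_congr rfl (fun j _ => h j), Finset.sum_const_zero, sub_zero]

lemma coeff_G_zero {n d : ℕ} (hd : 2 ≤ d) (f : MvPolynomial (Fin n) ℝ) {N : Fin n → ℝ}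
    {iP : Fin n → MvPolynomial (Fin n) ℝ}
    (hiP : ∀ j, iP j = C ((1 : ℝ) / n) - (C (N j)⁻¹ * X j) ^ d) (lam : Fin n → ℝ) :
    (f - ∑ j, C (lam j) * iP j).coeff 0 = f.coeff 0 - (∑ j, lam j)/n := by
  rw [coeff_sub, coeff_sum]
  congr 1
  rw [Finset.sum_div]
  refine Finset.sum_congr rfl (fun j _ => ?_)
  rw [coeff_C_mul, coeff_iP hiP, if_pos rfl, if_neg ?_]
  · ring
  · intro h
    have := Finsupp.single_eq_zero.mp h
    omega

lemma coeff_G_single {n d : ℕ} (hd : 2 ≤ d) (f : MvPolynomial (Fin n) ℝ) {N : Fin n → ℝ}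
    {iP : Fin n → MvPolynomial (Fin n) ℝ}
    (hiP : ∀ j, iP j = C ((1 : ℝ) / n) - (C (N j)⁻¹ * X j) ^ d) (lam : Fin n → ℝ) (i : Fin n) :
    (f - ∑ j, C (lam j) * iP j).coeff (Finsupp.single i d) =
      f.coeff (Finsupp.single i d) + lam i * ((N i)⁻¹)^d := by
  rw [coeff_sub, coeff_sum]
  have hne : (0 : Fin n →₀ ℕ) ≠ Finsupp.single i d := by
    intro h
    have := Finsupp.single_eq_zero.mp h.symm
    omega
  have h : ∀ j : Fin n, coeff (Finsupp.single i d) (C (lam j) * iP j)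
      = if j = i then -(lam i * ((N i)⁻¹)^d) else 0 := by
    intro j
    by_cases hji : j = i
    · subst hji
      rw [coeff_C_mul, coeff_iP hiP, if_neg hne, if_pos rfl, if_pos rfl]
      ring
    · rw [coeff_C_mul, coeff_iP hiP, if_neg hne,
        if_neg (fun hc => hji (Finsupp.single_left_injective (by omega : d ≠ 0) hc)),
        if_neg hji]
      ring
  rw [Finset.sum_congr rfl (fun j _ => h j), Finset.sum_ite_eq' univ i, if_pos (mem_univ i)]
  ring

lemma Delta_G {n d : ℕ} (f : MvPolynomial (Fin n) ℝ) {N : Fin n → ℝ}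
    {iP : Fin n → MvPolynomial (Fin n) ℝ}
    (hiP : ∀ j, iP j = C ((1 : ℝ) / n) - (C (N j)⁻¹ * X j) ^ d) (lam : Fin n → ℝ) :
    Delta d (f - ∑ j, C (lam j) * iP j) = Delta d f := by
  ext α
  simp only [Delta, mem_filter, mem_support_iff]
  constructor
  · rintro ⟨hs, hw, h0, hsing, hneg⟩
    rw [coeff_G_ne f hiP lam α h0 hsing] at hs hneg
    exact ⟨hs, hw, h0, hsing, hneg⟩
  · rintro ⟨hs, hw, h0, hsing, hneg⟩
    rw [← coeff_G_ne f hiP lam α h0 hsing] at hs hneg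
    exact ⟨hs, hw, h0, hsing, hneg⟩

/-- Remark (3): with `i = (1/n - (x₁/N₁)^d, …)` and
`N' = N·n^{-1/d}`, one has `f_{tr,N'} ≤ s(f,i)`, with equality if
`f_{d,i} ≤ 0` for all `i`. -/
theorem stmt_18 (n d : ℕ) (hn : 0 < n) (hd2 : 2 ≤ d) (hdeven : Even d)
    (f : MvPolynomial (Fin n) ℝ) (hf : f.totalDegree ≤ d)
    (N : Fin n → ℝ) (hN : ∀ i, 0 < N i)
    (iP : Fin n → MvPolynomial (Fin n) ℝ)
    (hiP : ∀ j, iP j = C ((1 : ℝ) / n) - (C (N j)⁻¹ * X j) ^ d)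
    (N' : Fin n → ℝ)
    (hN' : ∀ i, N' i = N i * (n : ℝ) ^ (-(1 : ℝ) / (d : ℝ))) :
    ((trivialBound f N' : ℝ) : EReal) ≤ sBound d f iP ∧
    ((∀ i, f.coeff (Finsupp.single i d) ≤ 0) →
      ((trivialBound f N' : ℝ) : EReal) = sBound d f iP) := by
  classical
  have hd0 : 0 < d := by omega
  have hdne : d ≠ 0 := by omega
  have hD : (0:ℝ) < d := by exact_mod_cast hd0
  have hD0 : (d:ℝ) ≠ 0 := ne_of_gt hD
  have hnR : (0:ℝ) < n := by exact_mod_cast hn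
  have hn0 : (n:ℝ) ≠ 0 := ne_of_gt hnR
  have hNp : ∀ i, 0 < N' i := fun i => by
    rw [hN' i]; exact mul_pos (hN i) (Real.rpow_pos_of_pos hnR _)
  have hNpd : ∀ i, (N' i)^d = N i ^ d / n := by
    intro i
    rw [hN' i, mul_pow, ← Real.rpow_natCast ((n:ℝ) ^ (-(1:ℝ)/(d:ℝ))) d,
      ← Real.rpow_mul hnR.le]
    have he : (-(1:ℝ)/(d:ℝ)) * d = -1 := by field_simp
    rw [he, Real.rpow_neg_one, div_eq_mul_inv]
  -- Delta facts
  have hwtle : ∀ α ∈ Delta d f, wt α ≤ d := fun α hα => (mem_filter.mp hα).2.1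
  have hne0 : ∀ α ∈ Delta d f, f.coeff α ≠ 0 :=
    fun α hα => mem_support_iff.mp (mem_filter.mp hα).1
  have hnz0 : ∀ α ∈ Delta d f, α ≠ 0 := fun α hα => (mem_filter.mp hα).2.2.1
  have hnsing : ∀ α ∈ Delta d f, ∀ i, α ≠ Finsupp.single i d :=
    fun α hα => (mem_filter.mp hα).2.2.2.1
  have hapos : ∀ α ∈ Delta d f, 0 < |f.coeff α| := fun α hα => abs_pos.mpr (hne0 α hα)
  have hPpos : ∀ α : Fin n →₀ ℕ, 0 < ∏ j, N' j ^ α j :=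
    fun α => Finset.prod_pos (fun j _ => pow_pos (hNp j) _)
  have habs : ∀ α, (f.coeff α / d)^d = (|f.coeff α| / d)^d := by
    intro α
    have h : |f.coeff α| / d = |f.coeff α / d| := by rw [abs_div, abs_of_pos hD]
    rw [h, Even.pow_abs hdeven]
  -- decomposition of Delta'
  set Tneg := univ.filter (fun i => f.coeff (Finsupp.single i d) < 0) with hTneg
  have hsingle_ne : ∀ i : Fin n, (Finsupp.single i d : Fin n →₀ ℕ) ≠ 0 := by
    intro i h
    exact hdne (Finsupp.single_eq_zero.mp h)
  have hsingle_no_odd : ∀ i j : Fin n, ¬ Odd ((Finsupp.single i d : Fin n →₀ ℕ) j) := by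
    intro i j
    rw [Finsupp.single_apply]
    split_ifs
    · exact (Nat.not_odd_iff_even.mpr hdeven)
    · exact (Nat.not_odd_iff_even.mpr Even.zero)
  have hDelta' : Delta' f = Delta d f ∪ Tneg.image (fun i => Finsupp.single i d) := by
    ext β
    constructor
    · intro hβ
      obtain ⟨hs, h0, hneg⟩ := mem_filter.mp hβ
      by_cases hsing : ∀ i, β ≠ Finsupp.single i d
      · exact Finset.mem_union_left _ (mem_filter.mpr
          ⟨hs, le_trans (MvPolynomial.le_totalDegree hs) hf,
            h0, hsing, hneg⟩)
      · push_neg at hsing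
        obtain ⟨i, hi⟩ := hsing
        subst hi
        refine Finset.mem_union_right _ (Finset.mem_image.mpr ⟨i, ?_, rfl⟩)
        rw [hTneg, mem_filter]
        refine ⟨mem_univ i, ?_⟩
        rcases hneg with h | ⟨j, hj⟩
        · exact h
        · exact absurd hj (hsingle_no_odd i j)
    · intro hβ
      rcases Finset.mem_union.mp hβ with h | h
      · obtain ⟨hs, _, h0, _, hneg⟩ := mem_filter.mp h
        exact mem_filter.mpr ⟨hs, h0, hneg⟩
      · obtain ⟨i, hi, rfl⟩ := Finset.mem_image.mp h
        have hlt : f.coeff (Finsupp.single i d) < 0 := (mem_filter.mp hi).2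
        exact mem_filter.mpr ⟨mem_support_iff.mpr (ne_of_lt hlt), hsingle_ne i, Or.inl hlt⟩
  have hdisj : Disjoint (Delta d f) (Tneg.image (fun i => Finsupp.single i d)) := by
    rw [Finset.disjoint_left]
    intro β hβ hβ'
    obtain ⟨i, _, hi⟩ := Finset.mem_image.mp hβ'
    exact hnsing β hβ i hi.symm
  have hP1 : ∀ i : Fin n, ∏ j, N' j ^ (Finsupp.single i d) j = N i ^ d / n := by
    intro i
    rw [Finset.prod_eq_single i
      (fun j _ hj => by rw [Finsupp.single_apply, if_neg (fun h => hj h.symm), pow_zero])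
      (fun h => absurd (mem_univ i) h), Finsupp.single_eq_same, hNpd i]
  have htr : trivialBound f N' = f.coeff 0 -
      (∑ α ∈ Delta d f, |f.coeff α| * ∏ j, N' j ^ α j
        + ∑ i ∈ Tneg, |f.coeff (Finsupp.single i d)| * (N i ^ d / n)) := by
    rw [trivialBound, hDelta', Finset.sum_union hdisj,
      Finset.sum_image (fun i _ j _ h => Finsupp.single_left_injective hdne h)]
    congr 1
    congr 1
    exact Finset.sum_congr rfl (fun i _ => by rw [hP1 i])
  -- ===================== PART 1 =====================
  set zz : (Fin n →₀ ℕ) → Fin n → ℝ :=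
    fun α i => (α i : ℝ) * (|f.coeff α| * ∏ j, N' j ^ α j) / (d * N' i ^ d) with hzz
  set lam1 : Fin n → ℝ :=
    fun i => N i ^ d * ((∑ α ∈ Delta d f, zz α i) + max 0 (-f.coeff (Finsupp.single i d)))
    with hlam1
  have hzznn : ∀ α i, 0 ≤ zz α i := by
    intro α i
    have h1 := hNp i
    have h2 := (hPpos α).le
    simp only [hzz]
    positivity
  have hlam1nn : ∀ j, 0 ≤ lam1 j := fun j => mul_nonneg (pow_nonneg (hN j).le _)
    (add_nonneg (Finset.sum_nonneg fun α _ => hzznn α j) (le_max_left 0 _))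
  set G1 := f - ∑ j, C (lam1 j) * iP j with hG1
  have hDG1 : Delta d G1 = Delta d f := Delta_G f hiP lam1
  have hcoeffG1 : ∀ α ∈ Delta d f, G1.coeff α = f.coeff α := fun α hα =>
    coeff_G_ne f hiP lam1 α (hnz0 α hα) (hnsing α hα)
  have hFeas : Feasible d G1 zz := by
    refine ⟨?_, ?_, ?_⟩
    · intro α hα i
      rw [hDG1] at hα
      refine ⟨hzznn α i, ?_⟩
      have hden : (d:ℝ) * N' i ^ d ≠ 0 := by
        have := hNp i; positivity
      have hmne : |f.coeff α| * ∏ j, N' j ^ α j ≠ 0 := by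
        have h1 := hapos α hα
        have h2 := hPpos α
        positivity
      constructor
      · intro h
        simp only [hzz] at h
        rcases mul_eq_zero.mp ((div_eq_zero_iff.mp h).resolve_right hden) with h1 | h2
        · exact_mod_cast h1
        · exact absurd h2 hmne
      · intro h
        simp only [hzz, h]
        simp
    · intro i
      rw [hDG1, hG1, coeff_G_single hd2 f hiP lam1 i]
      have hcan : lam1 i * ((N i)⁻¹)^d
          = (∑ α ∈ Delta d f, zz α i) + max 0 (-f.coeff (Finsupp.single i d)) := by
        simp only [hlam1]
        rw [mul_comm (N i ^ d) _, mul_assoc, ← mul_pow, mul_inv_cancel₀ (hN i).ne', one_pow,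
          mul_one]
      rw [hcan]
      have := le_max_right (0:ℝ) (-f.coeff (Finsupp.single i d))
      linarith
    · intro α hα hw
      rw [hDG1] at hα
      rw [hcoeffG1 α hα, habs α]
      simp only [hzz]
      exact consC1 α |f.coeff α| N' hd0 (hapos α hα) hNp hw
  have hobj : obj d G1 zz
      = ∑ α ∈ Delta d f, ((d:ℝ) - wt α) * ((|f.coeff α| * ∏ j, N' j ^ α j) / d) := by
    simp only [obj]
    rw [hDG1]
    have hterm : ∀ α ∈ (Delta d f).filter (fun α => wt α < d),
        ((d : ℝ) - (wt α : ℝ)) *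
          ((G1.coeff α / (d : ℝ)) ^ d *
            ∏ i ∈ univ.filter (fun i => 0 < α i), ((α i : ℝ) / zz α i) ^ (α i)) ^
            ((1 : ℝ) / ((d : ℝ) - (wt α : ℝ)))
        = ((d:ℝ) - wt α) * ((|f.coeff α| * ∏ j, N' j ^ α j) / d) := by
      intro α hα'
      obtain ⟨hα, hlt⟩ := mem_filter.mp hα'
      rw [hcoeffG1 α hα, habs α]
      congr 1
      simp only [hzz]
      rw [consC2 α |f.coeff α| N' hd0 (hapos α hα) hNp (hwtle α hα)]
      have hmnn : (0:ℝ) ≤ (|f.coeff α| * ∏ j, N' j ^ α j) / d :=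
        div_nonneg (mul_nonneg (abs_nonneg _) (hPpos α).le) hD.le
      have hsub0 : (d:ℝ) - (wt α : ℝ) ≠ 0 := by
        have : (wt α : ℝ) < d := by exact_mod_cast hlt
        linarith
      rw [← Real.rpow_natCast _ (d - wt α), ← Real.rpow_mul hmnn, Nat.cast_sub (hwtle α hα),
        mul_one_div, div_self hsub0, Real.rpow_one]
    rw [Finset.sum_congr rfl hterm]
    refine Finset.sum_filter_of_ne (fun α hα hne => ?_)
    by_contra hcon
    have heq : wt α = d := Nat.le_antisymm (hwtle α hα) (not_lt.mp hcon)
    apply hne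
    rw [heq, sub_self, zero_mul]
  have hG10 : G1.coeff 0 = f.coeff 0 - (∑ j, lam1 j)/n := coeff_G_zero hd2 f hiP lam1
  have hlamsum : (∑ j, lam1 j)/n
      = (∑ α ∈ Delta d f, (wt α : ℝ)/d * (|f.coeff α| * ∏ j, N' j ^ α j))
        + ∑ i ∈ Tneg, |f.coeff (Finsupp.single i d)| * (N i ^ d / n) := by
    rw [Finset.sum_div]
    have hj : ∀ j, lam1 j / n = (∑ α ∈ Delta d f, zz α j * N' j ^ d)
        + (N j ^ d / n) * max 0 (-f.coeff (Finsupp.single j d)) := by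
      intro j
      simp only [hlam1]
      rw [mul_add, add_div, mul_div_right_comm, ← hNpd j, mul_comm (N' j ^ d) _,
        Finset.sum_mul, mul_div_right_comm, ← hNpd j]
    rw [Finset.sum_congr rfl (fun j _ => hj j), Finset.sum_add_distrib]
    congr 1
    · rw [Finset.sum_comm]
      refine Finset.sum_congr rfl (fun α _ => ?_)
      simp only [hzz]
      exact consC3 α |f.coeff α| N' hd0 hNp
    · rw [hTneg, ← Finset.sum_filter_of_ne
        (f := fun j => (N j ^ d / n) * max 0 (-f.coeff (Finsupp.single j d)))
        (p := fun j => f.coeff (Finsupp.single j d) < 0) ?hvan]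
      · refine Finset.sum_congr rfl (fun i hi => ?_)
        have hlt : f.coeff (Finsupp.single i d) < 0 := (mem_filter.mp hi).2
        rw [max_eq_right (by linarith : (0:ℝ) ≤ -f.coeff (Finsupp.single i d)),
          abs_of_neg hlt]
        ring
      · intro j _ hne
        by_contra hcon
        push_neg at hcon
        apply hne
        rw [max_eq_left (by linarith : -f.coeff (Finsupp.single j d) ≤ 0), mul_zero]
  have hreal : G1.coeff 0 - obj d G1 zz = trivialBound f N' := by
    rw [hG10, hobj, hlamsum, htr]
    have hcomb : ∑ α ∈ Delta d f, (wt α : ℝ)/d * (|f.coeff α| * ∏ j, N' j ^ α j)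
        + ∑ α ∈ Delta d f, ((d:ℝ) - wt α) * ((|f.coeff α| * ∏ j, N' j ^ α j) / d)
        = ∑ α ∈ Delta d f, |f.coeff α| * ∏ j, N' j ^ α j := by
      rw [← Finset.sum_add_distrib]
      refine Finset.sum_congr rfl (fun α _ => ?_)
      field_simp
      ring
    linarith
  have hrho1 : rho d G1 ≤ ((obj d G1 zz : ℝ) : EReal) := sInf_le ⟨zz, hFeas, rfl⟩
  have hgp1 : ((trivialBound f N' : ℝ) : EReal) ≤ gp d G1 := by
    calc ((trivialBound f N' : ℝ) : EReal)
        = ((G1.coeff 0 - obj d G1 zz : ℝ) : EReal) := by rw [hreal]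
      _ = ((G1.coeff 0 : ℝ) : EReal) - ((obj d G1 zz : ℝ) : EReal) := EReal.coe_sub _ _
      _ ≤ ((G1.coeff 0 : ℝ) : EReal) - rho d G1 := EReal.sub_le_sub le_rfl hrho1
      _ = gp d G1 := rfl
  have part1 : ((trivialBound f N' : ℝ) : EReal) ≤ sBound d f iP :=
    hgp1.trans (le_sSup ⟨lam1, hlam1nn, by rw [hG1]⟩)
  refine ⟨part1, fun hcoef => le_antisymm part1 (sSup_le ?_)⟩
  rintro r ⟨lam, hlam, rfl⟩
  set G := f - ∑ j, C (lam j) * iP j with hGdef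
  have hDG : Delta d G = Delta d f := Delta_G f hiP lam
  have hcoeffG : ∀ α ∈ Delta d f, G.coeff α = f.coeff α := fun α hα =>
    coeff_G_ne f hiP lam α (hnz0 α hα) (hnsing α hα)
  have hG0 : G.coeff 0 = f.coeff 0 - (∑ j, lam j)/n := coeff_G_zero hd2 f hiP lam
  have hTn : ∑ i ∈ Tneg, |f.coeff (Finsupp.single i d)| * (N i ^ d / n)
      = ∑ i, |f.coeff (Finsupp.single i d)| * (N i ^ d / n) := by
    rw [hTneg]
    refine Finset.sum_filter_of_ne (fun i _ hne => ?_)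
    rcases lt_or_eq_of_le (hcoef i) with h | h
    · exact h
    · exact absurd (by rw [h, abs_zero, zero_mul]) hne
  have hrho : ((G.coeff 0 - trivialBound f N' : ℝ) : EReal) ≤ rho d G := by
    refine le_sInf ?_
    rintro r ⟨z, hz, rfl⟩
    rw [EReal.coe_le_coe_iff]
    obtain ⟨hz1, hz2, hz3⟩ := hz
    rw [hDG] at hz1 hz3
    have hz2' : ∀ i, ∑ α ∈ Delta d f, z α i ≤ G.coeff (Finsupp.single i d) := by
      intro i
      rw [← hDG]
      exact hz2 i
    -- Claim A
    have hA : ∀ i, (∑ α ∈ Delta d f, z α i) * N' i ^ d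
        + |f.coeff (Finsupp.single i d)| * (N i ^ d / n) ≤ lam i / n := by
      intro i
      have h2 := hz2' i
      rw [hGdef, coeff_G_single hd2 f hiP lam i] at h2
      have hmul := mul_le_mul_of_nonneg_right h2 (pow_nonneg (hNp i).le d)
      have hinv : ((N i)⁻¹)^d * (N i ^ d / n) = 1/n := by
        rw [← mul_div_assoc, ← mul_pow, inv_mul_cancel₀ (hN i).ne', one_pow]
      have e1 : (f.coeff (Finsupp.single i d) + lam i * ((N i)⁻¹)^d) * N' i ^ d
          = f.coeff (Finsupp.single i d) * (N i ^ d / n) + lam i / n := by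
        rw [hNpd i, add_mul, mul_assoc, hinv, mul_one_div]
      have habs' : f.coeff (Finsupp.single i d) * (N i ^ d / n)
          = -(|f.coeff (Finsupp.single i d)| * (N i ^ d / n)) := by
        rw [abs_of_nonpos (hcoef i)]; ring
      rw [e1, habs'] at hmul
      linarith
    -- Claim B
    have hB : ∀ α ∈ Delta d f, |f.coeff α| * ∏ j, N' j ^ α j
        ≤ (if wt α < d then ((d : ℝ) - (wt α : ℝ)) *
            ((G.coeff α / (d : ℝ)) ^ d *
              ∏ i ∈ univ.filter (fun i => 0 < α i), ((α i : ℝ) / z α i) ^ (α i)) ^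
              ((1 : ℝ) / ((d : ℝ) - (wt α : ℝ))) else 0)
          + ∑ i ∈ univ.filter (fun i => 0 < α i), z α i * N' i ^ d := by
      intro α hα
      have hzpos : ∀ i, 0 < α i → 0 < z α i := by
        intro i hi
        rcases (hz1 α hα i).1.lt_or_eq with h | h
        · exact h
        · exact absurd ((hz1 α hα i).2.mp h.symm) hi.ne'
      have hprodnn : (0:ℝ) ≤ ∏ i ∈ univ.filter (fun i => 0 < α i), ((α i : ℝ) / z α i) ^ α i :=
        Finset.prod_nonneg (fun i hi => pow_nonneg
          (div_nonneg (Nat.cast_nonneg _) (hz1 α hα i).1) _)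
      by_cases hlt : wt α < d
      · rw [if_pos hlt, hcoeffG α hα, habs α]
        set Q := (|f.coeff α| / (d:ℝ)) ^ d *
          ∏ i ∈ univ.filter (fun i => 0 < α i), ((α i : ℝ) / z α i) ^ α i with hQ
        have hQnn : 0 ≤ Q := mul_nonneg (pow_nonneg (by positivity) _) hprodnn
        have hsub0 : (d:ℝ) - (wt α : ℝ) ≠ 0 := by
          have : (wt α : ℝ) < d := by exact_mod_cast hlt
          linarith
        have hX : (Q ^ ((1:ℝ)/((d:ℝ) - wt α))) ^ (d - wt α) = (|f.coeff α| / (d:ℝ)) ^ d *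
            ∏ i ∈ univ.filter (fun i => 0 < α i), ((α i : ℝ) / z α i) ^ α i := by
          rw [← Real.rpow_natCast (Q ^ ((1:ℝ)/((d:ℝ) - wt α))) (d - wt α),
            ← Real.rpow_mul hQnn, Nat.cast_sub (hwtle α hα), one_div,
            inv_mul_cancel₀ hsub0, Real.rpow_one, hQ]
        exact amgm_main hd0 α (hwtle α hα) |f.coeff α| (hapos α hα) N' hNp (z α) hzpos
          (Q ^ ((1:ℝ)/((d:ℝ) - wt α))) (Real.rpow_nonneg hQnn _) hX
      · rw [if_neg hlt]
        have hwteq : wt α = d := Nat.le_antisymm (hwtle α hα) (not_lt.mp hlt)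
        have hprod := hz3 α hα hwteq
        rw [hcoeffG α hα, habs α] at hprod
        have hpp : (0:ℝ) < (|f.coeff α| / (d:ℝ)) ^ d :=
          pow_pos (div_pos (hapos α hα) hD) _
        have hinvprod : ∏ i ∈ univ.filter (fun i => 0 < α i), ((α i : ℝ) / z α i) ^ α i
            = (∏ i ∈ univ.filter (fun i => 0 < α i), (z α i / (α i : ℝ)) ^ α i)⁻¹ := by
          rw [← Finset.prod_inv_distrib]
          exact Finset.prod_congr rfl (fun i hi => by rw [← inv_pow, inv_div])
        have hX : (1:ℝ) ^ (d - wt α) = (|f.coeff α| / (d:ℝ)) ^ d *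
            ∏ i ∈ univ.filter (fun i => 0 < α i), ((α i : ℝ) / z α i) ^ α i := by
          rw [hwteq, Nat.sub_self, pow_zero, hinvprod, hprod, mul_inv_cancel₀ hpp.ne']
        have h := amgm_main hd0 α (hwtle α hα) |f.coeff α| (hapos α hα) N' hNp (z α) hzpos
          1 zero_le_one hX
        rw [hwteq, sub_self, zero_mul, zero_add] at h
        linarith
    have hBsum := Finset.sum_le_sum hB
    rw [Finset.sum_add_distrib] at hBsum
    have hobj2 : obj d G z = ∑ α ∈ Delta d f,
        (if wt α < d then ((d : ℝ) - (wt α : ℝ)) *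
            ((G.coeff α / (d : ℝ)) ^ d *
              ∏ i ∈ univ.filter (fun i => 0 < α i), ((α i : ℝ) / z α i) ^ (α i)) ^
              ((1 : ℝ) / ((d : ℝ) - (wt α : ℝ))) else 0) := by
      simp only [obj]
      rw [hDG, Finset.sum_filter]
    have hsum1 : ∑ α ∈ Delta d f, ∑ i ∈ univ.filter (fun i => 0 < α i), z α i * N' i ^ d
        ≤ ∑ i, (∑ α ∈ Delta d f, z α i) * N' i ^ d := by
      calc ∑ α ∈ Delta d f, ∑ i ∈ univ.filter (fun i => 0 < α i), z α i * N' i ^ d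
          ≤ ∑ α ∈ Delta d f, ∑ i, z α i * N' i ^ d :=
            Finset.sum_le_sum (fun α hα => Finset.sum_le_sum_of_subset_of_nonneg
              (Finset.filter_subset _ _)
              (fun i _ _ => mul_nonneg (hz1 α hα i).1 (pow_nonneg (hNp i).le _)))
        _ = ∑ i, (∑ α ∈ Delta d f, z α i) * N' i ^ d := by
            rw [Finset.sum_comm]
            exact Finset.sum_congr rfl (fun i _ => by rw [Finset.sum_mul])
    have hAsum : ∑ i, ((∑ α ∈ Delta d f, z α i) * N' i ^ d)
        + ∑ i, |f.coeff (Finsupp.single i d)| * (N i ^ d / n) ≤ (∑ j, lam j)/n := by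
      rw [← Finset.sum_add_distrib, Finset.sum_div]
      exact Finset.sum_le_sum (fun i _ => hA i)
    rw [hG0, htr, hobj2]
    linarith
  calc gp d G = ((G.coeff 0 : ℝ) : EReal) - rho d G := rfl
    _ ≤ ((G.coeff 0 : ℝ) : EReal) - ((G.coeff 0 - trivialBound f N' : ℝ) : EReal) :=
        EReal.sub_le_sub le_rfl hrho
    _ = ((trivialBound f N' : ℝ) : EReal) := by
        rw [← EReal.coe_sub, sub_sub_cancel]
end
end
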